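/- arXiv:1505.01128 — 2 statements merged into one kernel-verified Lean document; each statement's English description precedes it below -/
import Mathlib

section
/- For every TRS R over a signature Σ, the coinductively/inductively defined infinitary rewrite relation →∞ coincides with the standard ordinal-based relation →∞_ord of strongly convergent transfinite reduction: for all terms s, t ∈ T, s →∞ t if and only if s →∞_ord t. -/
open Relation

/-- A signature: a type of function symbols together with an arity for each symbol. -/
structure Signature where
  Sym : Type
  ar : Sym → ℕ

/-- The polynomial functor whose final coalgebra is the set of (finite and infinite)
terms over the signature `Sg` and the set `X` of variables. -/
def TermF (Sg : Signature) (X : Type) : PFunctor.{0} :=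
  ⟨X ⊕ Sg.Sym, fun a => Sum.rec (fun _ => Empty) (fun f => Fin (Sg.ar f)) a⟩

/-- The set `T` of finite and infinite terms over `Sg` and `X`, defined coinductively
(as the final coalgebra, i.e. the M-type, of `TermF Sg X`). -/
def Tm (Sg : Signature) (X : Type) : Type := PFunctor.M (TermF Sg X)

variable {Sg : Signature} {X : Type}

/-- The term consisting of a single variable. -/
def Tm.var (x : X) : Tm Sg X := PFunctor.M.mk ⟨Sum.inl x, Empty.elim⟩

/-- The term `f(t₁,…,tₙ)` with root symbol `f` and arguments `args`. -/
def Tm.node (f : Sg.Sym) (args : Fin (Sg.ar f) → Tm Sg X) : Tm Sg X :=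
  PFunctor.M.mk ⟨Sum.inr f, args⟩

/-- One step of the corecursive definition of substitution:
`Sum.inl t` means `t` still has to be substituted, `Sum.inr t` means `t` is copied. -/
def substAux (σ : X → Tm Sg X) :
    (Tm Sg X ⊕ Tm Sg X) → (TermF Sg X) (Tm Sg X ⊕ Tm Sg X) := fun s =>
  match s with
  | Sum.inl t =>
    match PFunctor.M.dest t with
    | ⟨Sum.inl x, _⟩ =>
        ⟨(PFunctor.M.dest (σ x)).1, fun b => Sum.inr ((PFunctor.M.dest (σ x)).2 b)⟩
    | ⟨Sum.inr f, k⟩ => ⟨Sum.inr f, fun b => Sum.inl (k b)⟩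
  | Sum.inr t =>
      ⟨(PFunctor.M.dest t).1, fun b => Sum.inr ((PFunctor.M.dest t).2 b)⟩

/-- Application `tσ` of a substitution `σ : X → T` to a term `t`, defined corecursively. -/
def subst (σ : X → Tm Sg X) (t : Tm Sg X) : Tm Sg X :=
  PFunctor.M.corec (substAux σ) (Sum.inl t)

/-- `Occurs x t`: the variable `x` occurs in the term `t`. -/
inductive Occurs (x : X) : Tm Sg X → Prop
  | here {t : Tm Sg X} : t = Tm.var x → Occurs x t
  | deeper {t : Tm Sg X} {f : Sg.Sym} {args : Fin (Sg.ar f) → Tm Sg X}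
      (i : Fin (Sg.ar f)) : t = Tm.node f args → Occurs x (args i) → Occurs x t

/-- A term rewriting system over `Sg` and `X`: a set of rules `ℓ → r` such that
`ℓ` is not a variable and all variables of `r` occur in `ℓ`. -/
structure TRS (Sg : Signature) (X : Type) where
  rules : Set (Tm Sg X × Tm Sg X)
  lhs_not_var : ∀ l r, (l, r) ∈ rules → ∀ x : X, l ≠ Tm.var x
  vars_lhs : ∀ l r, (l, r) ∈ rules → ∀ x : X, Occurs x r → Occurs x l

/-- Relations on terms. -/
abbrev TRel (Sg : Signature) (X : Type) := Tm Sg X → Tm Sg X → Prop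

/-- The root step relation `→ε := {(ℓσ, rσ) | ℓ → r ∈ R, σ a substitution}`. -/
def RootStep (R : TRS Sg X) : TRel Sg X := fun s t =>
  ∃ l r, (l, r) ∈ R.rules ∧ ∃ σ : X → Tm Sg X, s = subst σ l ∧ t = subst σ r

/-- `StepAt Q p s t`: a `Q`-step at position `p`, i.e. `s = C[u]`, `t = C[v]` with
`(u,v) ∈ Q` and `C` a one-hole context whose hole is at position `p`. -/
inductive StepAt (Q : TRel Sg X) : List ℕ → Tm Sg X → Tm Sg X → Prop
  | here {s t : Tm Sg X} : Q s t → StepAt Q [] s t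
  | deeper {f : Sg.Sym} {ss ts : Fin (Sg.ar f) → Tm Sg X} (i : Fin (Sg.ar f))
      {p : List ℕ} : StepAt Q p (ss i) (ts i) → (∀ j, j ≠ i → ss j = ts j) →
      StepAt Q ((i : ℕ) :: p) (Tm.node f ss) (Tm.node f ts)

/-- The one-step rewrite relation `→` of a TRS: a root step applied inside a
one-hole context. -/
def Step (R : TRS Sg X) : TRel Sg X := fun s t => ∃ p, StepAt (RootStep R) p s t

/-- The lifting `↓R` of a relation `R`:
`↓R := {(f(s₁,…,sₙ), f(t₁,…,tₙ)) | f ∈ Σ, s₁ R t₁, …, sₙ R tₙ} ∪ Id`. -/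
def liftRel (R : TRel Sg X) : TRel Sg X := fun s t =>
  s = t ∨ ∃ (f : Sg.Sym) (ss ts : Fin (Sg.ar f) → Tm Sg X),
    s = Tm.node f ss ∧ t = Tm.node f ts ∧ ∀ i, R (ss i) (ts i)

lemma liftRel_mono : Monotone (liftRel (Sg := Sg) (X := X)) := by
  intro R S h s t hst
  rcases hst with h1 | ⟨f, ss, ts, rfl, rfl, hi⟩
  · exact Or.inl h1
  · exact Or.inr ⟨f, ss, ts, rfl, rfl, fun i => h _ _ (hi i)⟩

/-- Relational composition `r ∘ s`. -/
def relComp (r s : TRel Sg X) : TRel Sg X := fun a c => ∃ b, r a b ∧ s b c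

/-- The monotone operator `S ↦ (→ε ∪ ↓R)* ∘ ↓S` (for a fixed `R`). -/
def iredInnerHom (R : TRS Sg X) (U : TRel Sg X) : TRel Sg X →o TRel Sg X where
  toFun S := relComp
    (ReflTransGen (fun s t => RootStep R s t ∨ liftRel U s t)) (liftRel S)
  monotone' := by
    intro S S' h a c hac
    rcases hac with ⟨b, h1, h2⟩
    exact ⟨b, h1, liftRel_mono h _ _ h2⟩

/-- The monotone operator `R ↦ νS.((→ε ∪ ↓R)* ∘ ↓S)`. -/
def iredHom (R : TRS Sg X) : TRel Sg X →o TRel Sg X where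
  toFun U := OrderHom.gfp (iredInnerHom R U)
  monotone' := by
    intro U V h
    apply OrderHom.gfp.monotone
    intro S a c hac
    rcases hac with ⟨b, h1, h2⟩
    refine ⟨b, ?_, h2⟩
    refine ReflTransGen.mono ?_ _ _ h1
    intro x y hxy
    exact hxy.imp id (fun h' => liftRel_mono h _ _ h')

/-- The infinitary rewrite relation `→∞ := μR.νS.((→ε ∪ ↓R)* ∘ ↓S)`. -/
def ired (R : TRS Sg X) : TRel Sg X := OrderHom.lfp (iredHom R)

/-- The monotone operator `R' ↦ (→ε ∪ ↓R')*`. -/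
def biHom (R : TRS Sg X) : TRel Sg X →o TRel Sg X where
  toFun U := ReflTransGen (fun s t => RootStep R s t ∨ liftRel U s t)
  monotone' := by
    intro U V h a b hab
    refine ReflTransGen.mono ?_ _ _ hab
    intro x y hxy
    exact hxy.imp id (fun h' => liftRel_mono h _ _ h')

/-- The bi-infinite rewrite relation `∞→ := νR.(→ε ∪ ↓R)*`. -/
def bired (R : TRS Sg X) : TRel Sg X := OrderHom.gfp (biHom R)

/-- The monotone operator `R' ↦ (←ε ∪ →ε ∪ ↓R')*`. -/
def ieqHom (R : TRS Sg X) : TRel Sg X →o TRel Sg X where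
  toFun U := ReflTransGen (fun s t => RootStep R t s ∨ RootStep R s t ∨ liftRel U s t)
  monotone' := by
    intro U V h a b hab
    refine ReflTransGen.mono ?_ _ _ hab
    intro x y hxy
    exact hxy.imp id (fun h' => h'.imp id (fun h'' => liftRel_mono h _ _ h''))

/-- The infinitary equational reasoning relation `=∞ := νR.(←ε ∪ →ε ∪ ↓R)*`. -/
def ieq (R : TRS Sg X) : TRel Sg X := OrderHom.gfp (ieqHom R)

/-- `Agree n s t`: the terms `s` and `t` coincide up to depth `n`
(i.e. `d(s,t) ≤ 2^{-n}` for the standard metric `d`). -/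
def Agree : ℕ → Tm Sg X → Tm Sg X → Prop
  | 0, _, _ => True
  | n + 1, s, t =>
      (∃ x : X, s = Tm.var x ∧ t = Tm.var x) ∨
      ∃ (f : Sg.Sym) (ss ts : Fin (Sg.ar f) → Tm Sg X),
        s = Tm.node f ss ∧ t = Tm.node f ts ∧ ∀ i, Agree n (ss i) (ts i)

/-- `ConvTo t p l tl`: as `β` approaches the ordinal `l` from below,
`d(t β, tl)` tends to `0` and the depth `|p β|` tends to infinity. -/
def ConvTo (t : Ordinal.{0} → Tm Sg X) (p : Ordinal.{0} → List ℕ) (l : Ordinal.{0})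
    (tl : Tm Sg X) : Prop :=
  (∀ n : ℕ, ∃ β₀ < l, ∀ β, β₀ ≤ β → β < l → Agree n (t β) tl) ∧
  (∀ n : ℕ, ∃ β₀ < l, ∀ β, β₀ ≤ β → β < l → n ≤ (p β).length)

/-- A transfinite sequence of `Q`-steps `(t_β →_{p_β} t_{β+1})_{β<α}` of ordinal
length `α`, weakly continuous and with depths tending to infinity at every limit
ordinal `λ < α`. -/
structure TransSeq (Q : TRel Sg X) (α : Ordinal.{0}) where
  t : Ordinal.{0} → Tm Sg X
  pos : Ordinal.{0} → List ℕ
  step : ∀ β < α, StepAt Q (pos β) (t β) (t (β + 1))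
  conv : ∀ l < α, Order.IsSuccLimit l → ConvTo t pos l (t l)

/-- A transfinite rewrite sequence is strongly convergent if its length is a successor
ordinal (or zero), or there exists a final term to which it converges (with depths
tending to infinity) at the limit. -/
def TransSeq.StronglyConvergent {Q : TRel Sg X} {α : Ordinal.{0}} (s : TransSeq Q α) : Prop :=
  Order.IsSuccLimit α → ∃ tl, ConvTo s.t s.pos α tl

/-- `SCRed Q s t`: there is a strongly convergent transfinite sequence of `Q`-steps
from `s` to `t`. -/
def SCRed (Q : TRel Sg X) : TRel Sg X := fun a b =>
  ∃ (α : Ordinal.{0}) (s : TransSeq Q α), s.t 0 = a ∧ s.t α = b ∧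
    (Order.IsSuccLimit α → ConvTo s.t s.pos α b)

/-- The standard, ordinal-based infinitary rewrite relation `→∞_ord`:
strongly convergent transfinite rewrite sequences. -/
def iredOrd (R : TRS Sg X) : TRel Sg X := SCRed (RootStep R)

-- auxiliary facts about the term constructors
lemma node_ne_var (f : Sg.Sym) (args : Fin (Sg.ar f) → Tm Sg X) (x : X) :
    Tm.node f args ≠ Tm.var x := by
  intro h
  have h1 := congrArg (fun u => (PFunctor.M.dest u).1) h
  simp only [Tm.node, Tm.var, PFunctor.M.dest_mk] at h1
  have h2 : (Sum.inr f : X ⊕ Sg.Sym) = Sum.inl x := h1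
  cases h2

lemma node_inj_sym {f g : Sg.Sym} {ss : Fin (Sg.ar f) → Tm Sg X}
    {ts : Fin (Sg.ar g) → Tm Sg X} (h : Tm.node f ss = Tm.node g ts) : f = g := by
  have h1 := congrArg (fun u => (PFunctor.M.dest u).1) h
  simp only [Tm.node, PFunctor.M.dest_mk] at h1
  exact Sum.inr.inj h1

lemma node_inj_args {f : Sg.Sym} {ss ts : Fin (Sg.ar f) → Tm Sg X}
    (h : Tm.node f ss = Tm.node f ts) : ss = ts := by
  have h' : (PFunctor.M.mk ⟨Sum.inr f, ss⟩ : Tm Sg X) = PFunctor.M.mk ⟨Sum.inr f, ts⟩ := h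
  have h1 := PFunctor.M.mk_inj h'
  injection h1 with h2 h3

lemma var_inj {x y : X} (h : (Tm.var x : Tm Sg X) = Tm.var y) : x = y := by
  have h1 := congrArg (fun u => (PFunctor.M.dest u).1) h
  simp only [Tm.var, PFunctor.M.dest_mk] at h1
  exact Sum.inl.inj h1

lemma occurs_var_iff {x y : X} : Occurs x (Tm.var y : Tm Sg X) ↔ x = y := by
  constructor
  · intro h
    cases h with
    | here h => exact (var_inj h.symm)
    | deeper i h _ => exact absurd h.symm (node_ne_var _ _ _)
  · rintro rfl
    exact Occurs.here rfl

lemma occurs_node_iff {x : X} {f : Sg.Sym} {args : Fin (Sg.ar f) → Tm Sg X} :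
    Occurs x (Tm.node f args) ↔ ∃ i, Occurs x (args i) := by
  constructor
  · intro h
    cases h with
    | here h => exact absurd h (node_ne_var _ _ _)
    | deeper i h hocc =>
      obtain rfl := node_inj_sym h
      obtain rfl := node_inj_args h
      exact ⟨i, hocc⟩
  · rintro ⟨i, h⟩
    exact Occurs.deeper i rfl h

/-!
Both inclusions go through strongly convergent reductions all of whose steps are at depth at
least `d`.

`→∞ ⊆ →∞_ord`: it suffices that `→∞_ord` is closed under the operator defining `→∞`. Unfolding
the greatest fixed point under `n` liftings yields a reduction at depth `≥ n` to a term related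
to the target by the fixed point lifted `n + 1` times, hence agreeing with it up to depth `n + 1`.
These reductions have depths tending to infinity, so their `ω`-concatenation converges strongly.

`→∞_ord ⊆ →∞`: fix a strongly convergent sequence and a position `p`. Strong convergence allows
only finitely many steps at `p`, and between two of them the root symbol at `p` does not change.
So the subterm at `p` evolves by finitely many root steps, interleaved with steps strictly
below `p`. Before each root step the arguments are related by `→∞` by ordinal induction on the
end of the segment (the `μ`); after the last one they are related coinductively (the `ν`).
-/

lemma Tm.var_or_node (t : Tm Sg X) :
    (∃ x, t = Tm.var x) ∨ ∃ f args, t = Tm.node f args := by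
  have h := PFunctor.M.mk_dest t
  rcases hd : PFunctor.M.dest t with ⟨a, k⟩
  rw [hd] at h
  cases a with
  | inl x =>
    refine Or.inl ⟨x, ?_⟩
    rw [← h, Tm.var, show k = Empty.elim from funext fun e => e.elim]
  | inr f => exact Or.inr ⟨f, k, by rw [← h]; rfl⟩

namespace Agree

lemma refl : ∀ (n : ℕ) (t : Tm Sg X), Agree n t t
  | 0, _ => trivial
  | n + 1, t => by
    rcases Tm.var_or_node t with ⟨x, rfl⟩ | ⟨f, args, rfl⟩
    · exact Or.inl ⟨x, rfl, rfl⟩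
    · exact Or.inr ⟨f, args, args, rfl, rfl, fun i => refl n _⟩

lemma symm : ∀ {n : ℕ} {s t : Tm Sg X}, Agree n s t → Agree n t s
  | 0, _, _, _ => trivial
  | _ + 1, _, _, h => by
    rcases h with ⟨x, rfl, rfl⟩ | ⟨f, ss, ts, rfl, rfl, hi⟩
    · exact Or.inl ⟨x, rfl, rfl⟩
    · exact Or.inr ⟨f, ts, ss, rfl, rfl, fun i => symm (hi i)⟩

lemma trans : ∀ {n : ℕ} {s t u : Tm Sg X}, Agree n s t → Agree n t u → Agree n s u
  | 0, _, _, _, _, _ => trivial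
  | _ + 1, _, _, _, h₁, h₂ => by
    rcases h₁ with ⟨x, rfl, rfl⟩ | ⟨f, ss, ts, rfl, rfl, hi⟩
    · rcases h₂ with ⟨y, hy, rfl⟩ | ⟨_, _, _, h, rfl, _⟩
      · exact Or.inl ⟨y, hy, rfl⟩
      · exact absurd h.symm (node_ne_var _ _ _)
    · rcases h₂ with ⟨y, hy, rfl⟩ | ⟨_, _, us, h, rfl, hi'⟩
      · exact absurd hy (node_ne_var _ _ _)
      · obtain rfl := node_inj_sym h.symm
        obtain rfl := node_inj_args h.symm
        exact Or.inr ⟨_, ss, us, rfl, rfl, fun i => trans (hi i) (hi' i)⟩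

lemma mono : ∀ {m n : ℕ}, m ≤ n → ∀ {s t : Tm Sg X}, Agree n s t → Agree m s t
  | 0, _, _, _, _, _ => trivial
  | _ + 1, 0, hmn, _, _, _ => absurd hmn (by omega)
  | _ + 1, _ + 1, hmn, _, _, h => by
    rcases h with ⟨x, rfl, rfl⟩ | ⟨f, ss, ts, rfl, rfl, hi⟩
    · exact Or.inl ⟨x, rfl, rfl⟩
    · exact Or.inr ⟨f, ss, ts, rfl, rfl, fun i => mono (by omega) (hi i)⟩

lemma var_left {x : X} {b : Tm Sg X} (h : Agree 1 (Tm.var x) b) : b = Tm.var x := by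
  rcases h with ⟨y, hy, rfl⟩ | ⟨_, _, _, hs, _, _⟩
  · rw [var_inj hy]
  · exact absurd hs.symm (node_ne_var _ _ _)

lemma node_left {f : Sg.Sym} {as : Fin (Sg.ar f) → Tm Sg X} {b : Tm Sg X}
    (h : Agree 1 (Tm.node f as) b) : ∃ bs, b = Tm.node f bs := by
  rcases h with ⟨_, hy, _⟩ | ⟨_, _, ts, hs, rfl, _⟩
  · exact absurd hy (node_ne_var _ _ _)
  · obtain rfl := node_inj_sym hs
    exact ⟨ts, rfl⟩

lemma node_update {n : ℕ} {f : Sg.Sym} {args : Fin (Sg.ar f) → Tm Sg X} {i : Fin (Sg.ar f)}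
    {x y : Tm Sg X} (h : Agree n x y) :
    Agree n (Tm.node f (Function.update args i x)) (Tm.node f (Function.update args i y)) := by
  cases n with
  | zero => trivial
  | succ m =>
    refine Or.inr ⟨f, _, _, rfl, rfl, fun j => ?_⟩
    rcases eq_or_ne j i with rfl | hj
    · simpa only [Function.update_self] using h.mono (Nat.le_succ m)
    · simpa only [Function.update_of_ne hj] using refl m (args j)

end Agree

lemma eq_of_forall_agree {s t : Tm Sg X} (h : ∀ n, Agree n s t) : s = t := by
  refine PFunctor.M.bisim (fun x y => ∀ n, Agree n x y) ?_ s t h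
  intro x y hxy
  rcases hxy 1 with ⟨z, rfl, rfl⟩ | ⟨f, ss, ts, rfl, rfl, _⟩
  · exact ⟨Sum.inl z, Empty.elim, Empty.elim, rfl, rfl, fun i => i.elim⟩
  · refine ⟨Sum.inr f, ss, ts, rfl, rfl, fun i n => ?_⟩
    rcases hxy (n + 1) with ⟨z, hz, _⟩ | ⟨g, ss', ts', h₁, h₂, hi⟩
    · exact absurd hz (node_ne_var _ _ _)
    · obtain rfl := node_inj_sym h₁
      obtain rfl := node_inj_args h₁
      obtain rfl := node_inj_args h₂
      exact hi i

inductive SubAt : List ℕ → Tm Sg X → Tm Sg X → Prop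
  | nil (t : Tm Sg X) : SubAt [] t t
  | cons {p : List ℕ} {a : Tm Sg X} {f : Sg.Sym} {args : Fin (Sg.ar f) → Tm Sg X}
      (i : Fin (Sg.ar f)) : SubAt p (args i) a → SubAt ((i : ℕ) :: p) (Tm.node f args) a

namespace SubAt

lemma nil_inv {t a : Tm Sg X} (h : SubAt [] t a) : a = t := by
  cases h
  rfl

lemma node_inv {j : ℕ} {p : List ℕ} {f : Sg.Sym} {args : Fin (Sg.ar f) → Tm Sg X}
    {a : Tm Sg X} (h : SubAt (j :: p) (Tm.node f args) a) :
    ∃ i : Fin (Sg.ar f), (i : ℕ) = j ∧ SubAt p (args i) a := by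
  generalize ht : Tm.node f args = t at h
  cases h with
  | cons i hsub =>
    obtain rfl := node_inj_sym ht
    obtain rfl := node_inj_args ht
    exact ⟨i, rfl, hsub⟩

lemma unique {p : List ℕ} {t a b : Tm Sg X} (ha : SubAt p t a) (hb : SubAt p t b) : a = b := by
  induction ha with
  | nil => exact (nil_inv hb).symm
  | cons i _ ih =>
    obtain ⟨i', hi', hsub⟩ := node_inv hb
    obtain rfl : i' = i := Fin.ext hi'
    exact ih hsub

lemma concat {p : List ℕ} {t : Tm Sg X} {f : Sg.Sym} {args : Fin (Sg.ar f) → Tm Sg X}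
    (h : SubAt p t (Tm.node f args)) (i : Fin (Sg.ar f)) :
    SubAt (p ++ [(i : ℕ)]) t (args i) := by
  generalize hb : Tm.node f args = b at h
  induction h with
  | nil => subst hb; exact cons i (nil _)
  | cons j _ ih => exact cons j (ih hb)

lemma exists_of_agree {p : List ℕ} {n : ℕ} {s s' a : Tm Sg X}
    (hag : Agree (p.length + n) s s') (h : SubAt p s a) : ∃ b, SubAt p s' b ∧ Agree n a b := by
  induction h generalizing s' with
  | nil => exact ⟨s', nil s', by simpa using hag⟩
  | @cons p a f args i _ ih =>
    rw [List.length_cons, Nat.add_right_comm] at hag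
    rcases hag with ⟨x, hx, _⟩ | ⟨g, ss, ts, hs, rfl, hi⟩
    · exact absurd hx (node_ne_var _ _ _)
    · obtain rfl := node_inj_sym hs
      obtain rfl := node_inj_args hs
      obtain ⟨b, hb, hab⟩ := ih (hi i)
      exact ⟨b, cons i hb, hab⟩

end SubAt

namespace StepAt

variable {Q : TRel Sg X}

lemma nil_inv {s t : Tm Sg X} (h : StepAt Q [] s t) : Q s t := by
  cases h
  assumption

lemma cons_inv {j : ℕ} {p : List ℕ} {s t : Tm Sg X} (h : StepAt Q (j :: p) s t) :
    ∃ (f : Sg.Sym) (ss ts : Fin (Sg.ar f) → Tm Sg X) (i : Fin (Sg.ar f)),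
      (i : ℕ) = j ∧ s = Tm.node f ss ∧ t = Tm.node f ts ∧
      StepAt Q p (ss i) (ts i) ∧ ∀ k, k ≠ i → ss k = ts k := by
  cases h with
  | deeper i hstep heq => exact ⟨_, _, _, i, rfl, rfl, rfl, hstep, heq⟩

lemma agree_length {p : List ℕ} {s t : Tm Sg X} (h : StepAt Q p s t) :
    Agree p.length s t := by
  induction h with
  | here _ => trivial
  | @deeper f ss ts i p _ heq ih =>
    refine Or.inr ⟨f, ss, ts, rfl, rfl, fun j => ?_⟩
    rcases eq_or_ne j i with rfl | hj
    · exact ih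
    · exact heq j hj ▸ Agree.refl _ _

lemma exists_subAt_of_prefix {p q : List ℕ} {s s' a : Tm Sg X}
    (h : StepAt Q (p ++ q) s s') (hsub : SubAt p s a) :
    ∃ b, SubAt p s' b ∧ StepAt Q q a b := by
  induction p generalizing s s' with
  | nil => exact ⟨s', SubAt.nil s', SubAt.nil_inv hsub ▸ h⟩
  | cons j p ih =>
    obtain ⟨f, ss, ts, i, rfl, rfl, rfl, hstep, _⟩ := cons_inv h
    obtain ⟨i', hi', hsub'⟩ := SubAt.node_inv hsub
    obtain rfl : i = i' := Fin.ext hi'.symm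
    obtain ⟨b, hb, hab⟩ := ih hstep hsub'
    exact ⟨b, SubAt.cons i hb, hab⟩

lemma subAt_of_not_prefix {p q : List ℕ} {s s' a : Tm Sg X} (h : StepAt Q q s s')
    (hsub : SubAt p s a) (hpq : ¬ p <+: q) (hqp : ¬ q <+: p) : SubAt p s' a := by
  induction p generalizing q s s' with
  | nil => exact absurd List.nil_prefix hpq
  | cons j p ih =>
    obtain _ | ⟨k, q⟩ := q
    · exact absurd List.nil_prefix hqp
    obtain ⟨f, ss, ts, i, rfl, rfl, rfl, hstep, heq⟩ := cons_inv h
    obtain ⟨i', rfl, hsub'⟩ := SubAt.node_inv hsub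
    by_cases hii : i' = i
    · subst hii
      simp only [List.cons_prefix_cons, true_and] at hpq hqp
      exact SubAt.cons i' (ih hstep hsub' hpq hqp)
    · exact SubAt.cons i' (heq i' hii ▸ hsub')

/-- `Agree 1` expresses that the root symbols coincide. -/
lemma exists_subAt_agree_one {p q : List ℕ} {s s' a : Tm Sg X} (h : StepAt Q q s s')
    (hqp : ¬ q <+: p) (hsub : SubAt p s a) : ∃ b, SubAt p s' b ∧ Agree 1 a b := by
  by_cases hpq : p <+: q
  · obtain ⟨r, rfl⟩ := hpq
    obtain ⟨b, hb, hab⟩ := exists_subAt_of_prefix h hsub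
    obtain _ | ⟨k, r⟩ := r
    · exact absurd (by simp) hqp
    · exact ⟨b, hb, hab.agree_length.mono (by simp)⟩
  · exact ⟨a, subAt_of_not_prefix h hsub hpq hqp, Agree.refl 1 a⟩

end StepAt

def EventuallyBelow (l : Ordinal.{0}) (P : Ordinal.{0} → Prop) : Prop :=
  ∃ β₀ < l, ∀ β, β₀ ≤ β → β < l → P β

lemma EventuallyBelow.mono {l : Ordinal.{0}} {P P' : Ordinal.{0} → Prop}
    (h : EventuallyBelow l P) (hPP' : ∀ β < l, P β → P' β) : EventuallyBelow l P' := by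
  obtain ⟨β₀, hβ₀, hP⟩ := h
  exact ⟨β₀, hβ₀, fun β h₁ h₂ => hPP' β h₂ (hP β h₁ h₂)⟩

lemma EventuallyBelow.add_left {a D : Ordinal.{0}} {P : Ordinal.{0} → Prop}
    (h : EventuallyBelow D fun δ => P (a + δ)) : EventuallyBelow (a + D) P := by
  obtain ⟨δ₀, hδ₀, hP⟩ := h
  refine ⟨a + δ₀, add_lt_add_right hδ₀ a, fun β h₁ h₂ => ?_⟩
  have hβ : a + (β - a) = β := Ordinal.add_sub_cancel_of_le (le_self_add.trans h₁)
  rw [← hβ] at h₁ h₂ ⊢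
  exact hP _ ((add_le_add_iff_left a).1 h₁) ((add_lt_add_iff_left a).1 h₂)

lemma ConvTo.congr {t t' : Ordinal.{0} → Tm Sg X} {p p' : Ordinal.{0} → List ℕ}
    {l : Ordinal.{0}} {x : Tm Sg X} (hc : ConvTo t p l x)
    (h : ∀ β < l, t' β = t β ∧ p' β = p β) : ConvTo t' p' l x :=
  ⟨fun n => EventuallyBelow.mono (hc.1 n) fun β hβ => (h β hβ).1 ▸ id,
    fun n => EventuallyBelow.mono (hc.2 n) fun β hβ => (h β hβ).2 ▸ id⟩

lemma ConvTo.add_left {t : Ordinal.{0} → Tm Sg X} {p : Ordinal.{0} → List ℕ}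
    {a D : Ordinal.{0}} {x : Tm Sg X}
    (hc : ConvTo (fun δ => t (a + δ)) (fun δ => p (a + δ)) D x) : ConvTo t p (a + D) x :=
  ⟨fun n => EventuallyBelow.add_left (hc.1 n), fun n => EventuallyBelow.add_left (hc.2 n)⟩

/-- Unlike `TransSeq`, this also requires convergence at the length itself. -/
structure SCSeq (Q : TRel Sg X) where
  len : Ordinal.{0}
  t : Ordinal.{0} → Tm Sg X
  pos : Ordinal.{0} → List ℕ
  step : ∀ β < len, StepAt Q (pos β) (t β) (t (β + 1))
  conv : ∀ l ≤ len, Order.IsSuccLimit l → ConvTo t pos l (t l)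

def DeepSCRed (Q : TRel Sg X) (d : ℕ) : TRel Sg X := fun a b =>
  ∃ σ : SCSeq Q, σ.t 0 = a ∧ σ.t σ.len = b ∧ ∀ β < σ.len, d ≤ (σ.pos β).length

lemma scRed_iff_deepSCRed_zero {Q : TRel Sg X} {a b : Tm Sg X} :
    SCRed Q a b ↔ DeepSCRed Q 0 a b := by
  constructor
  · rintro ⟨α, s, h0, hα, hlim⟩
    refine ⟨⟨α, s.t, s.pos, s.step, fun l hl hl' => ?_⟩, h0, hα, fun _ _ => Nat.zero_le _⟩
    rcases hl.lt_or_eq with hl | rfl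
    · exact s.conv l hl hl'
    · exact hα ▸ hlim hl'
  · rintro ⟨σ, h0, hlen, _⟩
    exact ⟨σ.len, ⟨σ.t, σ.pos, σ.step, fun l hl => σ.conv l hl.le⟩, h0, hlen,
      fun hl' => hlen ▸ σ.conv σ.len le_rfl hl'⟩

namespace SCSeq

variable {Q : TRel Sg X} (σ : SCSeq Q)

lemma rel_of_segment {Φ : TRel Sg X} (refl : ∀ a, Φ a a)
    (trans : ∀ {a b c}, Φ a b → Φ b c → Φ a c) {m : ℕ} (of_agree : ∀ {a b}, Agree m a b → Φ a b)
    {l r : Ordinal.{0}} (hlr : l ≤ r) (hr : r ≤ σ.len)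
    (hstep : ∀ β, l ≤ β → β < r → Φ (σ.t β) (σ.t (β + 1))) : Φ (σ.t l) (σ.t r) := by
  induction r using Ordinal.limitRecOn with
  | zero => rw [nonpos_iff_eq_zero.1 hlr]; exact refl _
  | add_one o ih =>
    rcases hlr.lt_or_eq with hlr | rfl
    · have hlo : l ≤ o := Order.le_of_lt_add_one hlr
      have ho : o < o + 1 := lt_add_one o
      exact trans (ih hlo (ho.le.trans hr) fun β h₁ h₂ => hstep β h₁ (h₂.trans ho))
        (hstep o hlo ho)
    · exact refl _
  | limit o hlim ih =>
    rcases hlr.lt_or_eq with hlr | rfl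
    · obtain ⟨β₀, hβ₀, hagree⟩ := (σ.conv o hr hlim).1 m
      have hβ : max l β₀ < o := max_lt hlr hβ₀
      exact trans (ih _ hβ (le_max_left _ _) (hβ.le.trans hr)
          fun β h₁ h₂ => hstep β h₁ (h₂.trans hβ))
        (of_agree (hagree _ (le_max_right _ _) hβ))
    · exact refl _

lemma agree_of_deep {n : ℕ} {l r : Ordinal.{0}} (hlr : l ≤ r) (hr : r ≤ σ.len)
    (hdeep : ∀ β, l ≤ β → β < r → n ≤ (σ.pos β).length) : Agree n (σ.t l) (σ.t r) :=
  σ.rel_of_segment (Agree.refl n) Agree.trans id hlr hr fun β h₁ h₂ =>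
    (σ.step β (h₂.trans_le hr)).agree_length.mono (hdeep β h₁ h₂)

lemma exists_subAt_agree_one {p : List ℕ} {l r : Ordinal.{0}} (hlr : l ≤ r) (hr : r ≤ σ.len)
    (havoid : ∀ β, l ≤ β → β < r → ¬ σ.pos β <+: p) {a : Tm Sg X}
    (ha : SubAt p (σ.t l) a) : ∃ b, SubAt p (σ.t r) b ∧ Agree 1 a b := by
  let Φ : TRel Sg X := fun u v => ∀ a, SubAt p u a → ∃ b, SubAt p v b ∧ Agree 1 a b
  have refl (u) : Φ u u := fun a ha => ⟨a, ha, Agree.refl 1 a⟩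
  have trans {u v w} (huv : Φ u v) (hvw : Φ v w) : Φ u w := fun a ha => by
    obtain ⟨b, hb, hab⟩ := huv a ha
    obtain ⟨c, hc, hbc⟩ := hvw b hb
    exact ⟨c, hc, hab.trans hbc⟩
  exact σ.rel_of_segment refl trans (m := p.length + 1)
    (fun hag a ha => SubAt.exists_of_agree hag ha) hlr hr
    (fun β h₁ h₂ => fun a ha => (σ.step β (h₂.trans_le hr)).exists_subAt_agree_one
      (havoid β h₁ h₂) ha) a ha

lemma finite_shallow (d : ℕ) {r : Ordinal.{0}} (hr : r ≤ σ.len) :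
    {β | β < r ∧ (σ.pos β).length ≤ d}.Finite := by
  induction r using Ordinal.limitRecOn with
  | zero => exact Set.finite_empty.subset fun β hβ => (not_lt_zero hβ.1).elim
  | add_one o ih =>
    refine ((ih (le_self_add.trans hr)).insert o).subset fun β ⟨hβ, hd⟩ => ?_
    rcases (Order.le_of_lt_add_one hβ).lt_or_eq with hβ | rfl
    · exact Or.inr ⟨hβ, hd⟩
    · exact Or.inl rfl
  | limit o hlim ih =>
    obtain ⟨β₀, hβ₀, hdeep⟩ := (σ.conv o hr hlim).2 (d + 1)
    refine (ih β₀ hβ₀ (hβ₀.le.trans hr)).subset fun β ⟨hβ, hd⟩ => ⟨?_, hd⟩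
    by_contra! h
    have := hdeep β h hβ
    omega

end SCSeq

noncomputable def appendFun {α : Type} (a : Ordinal.{0}) (f g : Ordinal.{0} → α)
    (β : Ordinal.{0}) : α :=
  if β < a then f β else g (β - a)

section appendFun

variable {α : Type} {a β : Ordinal.{0}} {f g : Ordinal.{0} → α}

lemma appendFun_of_lt (h : β < a) : appendFun a f g β = f β := if_pos h

lemma appendFun_add (δ : Ordinal.{0}) : appendFun a f g (a + δ) = g δ := by
  rw [appendFun, if_neg (not_lt.2 le_self_add), Ordinal.add_sub_cancel]

lemma appendFun_of_le (hfg : f a = g 0) (h : β ≤ a) : appendFun a f g β = f β := by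
  rcases h.lt_or_eq with h | rfl
  · exact appendFun_of_lt h
  · simpa [hfg] using appendFun_add (a := β) (f := f) (g := g) 0

end appendFun

namespace SCSeq

variable {Q : TRel Sg X}

noncomputable def append (σ τ : SCSeq Q) (h : σ.t σ.len = τ.t 0) : SCSeq Q where
  len := σ.len + τ.len
  t := appendFun σ.len σ.t τ.t
  pos := appendFun σ.len σ.pos τ.pos
  step β hβ := by
    by_cases hβσ : β < σ.len
    · rw [appendFun_of_lt hβσ, appendFun_of_lt hβσ,
        appendFun_of_le h (Order.add_one_le_iff.2 hβσ)]
      exact σ.step β hβσ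
    · obtain ⟨δ, rfl⟩ := exists_add_of_le (not_lt.1 hβσ)
      rw [add_assoc, appendFun_add, appendFun_add, appendFun_add]
      exact τ.step δ ((add_lt_add_iff_left _).1 hβ)
  conv l hl hlim := by
    by_cases hlσ : l ≤ σ.len
    · rw [appendFun_of_le h hlσ]
      exact (σ.conv l hlσ hlim).congr fun β hβ =>
        ⟨appendFun_of_lt (hβ.trans_le hlσ), appendFun_of_lt (hβ.trans_le hlσ)⟩
    · obtain ⟨D, rfl⟩ := exists_add_of_le (not_le.1 hlσ).le
      have hD : D ≠ 0 := by rintro rfl; simp at hlσ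
      rw [appendFun_add]
      refine ConvTo.add_left ?_
      simp only [appendFun_add]
      exact τ.conv D ((add_le_add_iff_left _).1 hl)
        ((Ordinal.isSuccLimit_add_iff.1 hlim).resolve_right fun h' => hD h'.1)

end SCSeq

namespace DeepSCRed

variable {Q : TRel Sg X}

lemma refl (d : ℕ) (a : Tm Sg X) : DeepSCRed Q d a a :=
  ⟨⟨0, fun _ => a, fun _ => [], fun _ h => (not_lt_zero h).elim,
    fun _ hl hlim => (hlim.ne_bot (nonpos_iff_eq_zero.1 hl)).elim⟩,
    rfl, rfl, fun _ h => (not_lt_zero h).elim⟩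

lemma single {d : ℕ} {p : List ℕ} {a b : Tm Sg X} (h : StepAt Q p a b) (hd : d ≤ p.length) :
    DeepSCRed Q d a b := by
  refine ⟨⟨1, fun β => if β = 0 then a else b, fun _ => p, fun β hβ => ?_, fun l hl hlim => ?_⟩,
    if_pos rfl, if_neg one_ne_zero, fun _ _ => hd⟩
  · rw [Order.lt_one_iff.1 hβ, if_pos rfl, zero_add, if_neg one_ne_zero]
    exact h
  · rcases hl.lt_or_eq with hl | rfl
    · exact (hlim.ne_bot (Order.lt_one_iff.1 hl)).elim
    · exact (Order.not_isSuccLimit_add_one (0 : Ordinal) (by simpa using hlim)).elim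

lemma mono {d d' : ℕ} (h : d' ≤ d) {a b : Tm Sg X} (hab : DeepSCRed Q d a b) :
    DeepSCRed Q d' a b := by
  obtain ⟨σ, h0, hl, hd⟩ := hab
  exact ⟨σ, h0, hl, fun β hβ => h.trans (hd β hβ)⟩

lemma trans {d : ℕ} {a b c : Tm Sg X} (hab : DeepSCRed Q d a b) (hbc : DeepSCRed Q d b c) :
    DeepSCRed Q d a c := by
  obtain ⟨σ, hσ0, hσe, hσd⟩ := hab
  obtain ⟨τ, hτ0, hτe, hτd⟩ := hbc
  have h : σ.t σ.len = τ.t 0 := hσe.trans hτ0.symm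
  refine ⟨σ.append τ h, ?_, ?_, fun β hβ => ?_⟩
  · exact (appendFun_of_le h zero_le).trans hσ0
  · exact (appendFun_add _).trans hτe
  · change d ≤ (appendFun σ.len σ.pos τ.pos β).length
    by_cases hβσ : β < σ.len
    · exact appendFun_of_lt hβσ ▸ hσd β hβσ
    · obtain ⟨δ, rfl⟩ := exists_add_of_le (not_lt.1 hβσ)
      exact appendFun_add δ ▸ hτd δ ((add_lt_add_iff_left _).1 hβ)

lemma node_update {d : ℕ} {f : Sg.Sym} {args : Fin (Sg.ar f) → Tm Sg X} {i : Fin (Sg.ar f)}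
    {b : Tm Sg X} (h : DeepSCRed Q d (args i) b) :
    DeepSCRed Q (d + 1) (Tm.node f args) (Tm.node f (Function.update args i b)) := by
  obtain ⟨σ, h0, he, hd⟩ := h
  refine ⟨⟨σ.len, fun β => Tm.node f (Function.update args i (σ.t β)),
    fun β => (i : ℕ) :: σ.pos β, fun β hβ => ?_, fun l hl hlim => ?_⟩, ?_,
    congrArg (fun x => Tm.node f (Function.update args i x)) he,
    fun β hβ => Nat.succ_le_succ (hd β hβ)⟩
  · refine StepAt.deeper i ?_ fun j hj => by simp only [Function.update_of_ne hj]
    simpa only [Function.update_self] using σ.step β hβ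
  · have hc := σ.conv l hl hlim
    exact ⟨fun n => EventuallyBelow.mono (hc.1 n) fun β _ => Agree.node_update,
      fun n => EventuallyBelow.mono (hc.2 n) fun β _ h => h.trans (Nat.le_succ _)⟩
  · simp only [h0, Function.update_eq_self]

lemma of_liftRel {d : ℕ} {a b : Tm Sg X} (h : liftRel (DeepSCRed Q d) a b) :
    DeepSCRed Q (d + 1) a b := by
  classical
  rcases h with rfl | ⟨f, ss, ts, rfl, rfl, hi⟩
  · exact refl _ _
  suffices ∀ s : Finset (Fin (Sg.ar f)),
      DeepSCRed Q (d + 1) (Tm.node f ss) (Tm.node f fun j => if j ∈ s then ts j else ss j) by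
    simpa using this Finset.univ
  intro s
  induction s using Finset.induction_on with
  | empty => simpa using refl (d + 1) (Tm.node f ss)
  | insert i s hi_s ih =>
    have hupd : Function.update (fun j => if j ∈ s then ts j else ss j) i (ts i) =
        fun j => if j ∈ insert i s then ts j else ss j := by
      funext j
      rcases eq_or_ne j i with rfl | hj
      · simp
      · simp [hj]
    refine ih.trans (hupd ▸ node_update ?_)
    simpa [hi_s] using hi i

lemma of_reflTransGen {W : TRel Sg X} (hW : ∀ a b, W a b → DeepSCRed Q 0 a b) {a b : Tm Sg X}
    (h : ReflTransGen (fun s t => Q s t ∨ liftRel W s t) a b) : DeepSCRed Q 0 a b := by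
  induction h with
  | refl => exact refl _ _
  | tail _ hstep ih =>
    refine ih.trans ?_
    rcases hstep with hstep | hstep
    · exact single (StepAt.here hstep) le_rfl
    · exact (of_liftRel (liftRel_mono hW _ _ hstep)).mono (Nat.zero_le 1)

end DeepSCRed

namespace SCSeq

variable {Q : TRel Sg X} (σs : ℕ → SCSeq Q)

/-- Where `σs n` starts in the concatenation of all the `σs k`. -/
noncomputable def chunkStart : ℕ → Ordinal.{0}
  | 0 => 0
  | n + 1 => chunkStart n + (σs n).len

lemma chunkStart_mono : Monotone (chunkStart σs) :=
  monotone_nat_of_le_succ fun _ => le_self_add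

lemma le_of_chunkStart_le_of_lt {m n : ℕ} {β : Ordinal.{0}} (h₁ : chunkStart σs m ≤ β)
    (h₂ : β < chunkStart σs (n + 1)) : m ≤ n := by
  by_contra! h
  exact lt_irrefl _ (h₂.trans_le ((chunkStart_mono σs h).trans h₁))

open Classical in
noncomputable def chunkIdx (β : Ordinal.{0}) : ℕ :=
  if h : ∃ n, β < chunkStart σs (n + 1) then Nat.find h else 0

lemma chunkIdx_spec {β : Ordinal.{0}} (hβ : ∃ n, β < chunkStart σs n) :
    chunkStart σs (chunkIdx σs β) ≤ β ∧ β < chunkStart σs (chunkIdx σs β + 1) := by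
  classical
  have h : ∃ n, β < chunkStart σs (n + 1) := by
    obtain ⟨_ | n, hn⟩ := hβ
    · exact (not_lt_zero hn).elim
    · exact ⟨n, hn⟩
  rw [chunkIdx, dif_pos h]
  refine ⟨?_, Nat.find_spec h⟩
  rcases hk : Nat.find h with _ | k
  · exact zero_le
  · exact not_lt.1 (Nat.find_min h (hk ▸ Nat.lt_succ_self k))

lemma chunkIdx_eq {n : ℕ} {β : Ordinal.{0}} (h₁ : chunkStart σs n ≤ β)
    (h₂ : β < chunkStart σs (n + 1)) : chunkIdx σs β = n :=
  have hβ := chunkIdx_spec σs ⟨n + 1, h₂⟩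
  le_antisymm (le_of_chunkStart_le_of_lt σs hβ.1 h₂) (le_of_chunkStart_le_of_lt σs h₁ hβ.2)

lemma exists_chunk {β : Ordinal.{0}} (hβ : ∃ n, β < chunkStart σs n) :
    ∃ k δ, δ < (σs k).len ∧ β = chunkStart σs k + δ :=
  have hk := chunkIdx_spec σs hβ
  ⟨chunkIdx σs β, β - chunkStart σs (chunkIdx σs β), (Ordinal.sub_lt_of_le hk.1).2 hk.2,
    (Ordinal.add_sub_cancel_of_le hk.1).symm⟩

lemma exists_chunk_of_pos {β : Ordinal.{0}} (hβ0 : 0 < β) (hβ : ∃ n, β < chunkStart σs n) :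
    ∃ k δ, 0 < δ ∧ δ ≤ (σs k).len ∧ β = chunkStart σs k + δ := by
  classical
  have h : ∃ n, β ≤ chunkStart σs (n + 1) := by
    obtain ⟨_ | n, hn⟩ := hβ
    · exact (not_lt_zero hn).elim
    · exact ⟨n, hn.le⟩
  have hk : chunkStart σs (Nat.find h) < β := by
    rcases hk : Nat.find h with _ | k
    · exact hβ0
    · exact not_le.1 (Nat.find_min h (hk ▸ Nat.lt_succ_self k))
  exact ⟨Nat.find h, β - chunkStart σs (Nat.find h), Ordinal.lt_sub.2 (by simpa using hk),
    Ordinal.sub_le.2 (Nat.find_spec h), (Ordinal.add_sub_cancel_of_le hk.le).symm⟩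

open Classical in
noncomputable def concatFun {α : Type} (f : ℕ → Ordinal.{0} → α) (x : α) (β : Ordinal.{0}) :
    α :=
  if ∃ n, β < chunkStart σs n then f (chunkIdx σs β) (β - chunkStart σs (chunkIdx σs β)) else x

variable {σs}

lemma concatFun_add {α : Type} {f : ℕ → Ordinal.{0} → α} {x : α} {n : ℕ} {δ : Ordinal.{0}}
    (hδ : δ < (σs n).len) : concatFun σs f x (chunkStart σs n + δ) = f n δ := by
  have h₂ : chunkStart σs n + δ < chunkStart σs (n + 1) := (add_lt_add_iff_left _).2 hδ
  rw [concatFun, if_pos ⟨n + 1, h₂⟩, chunkIdx_eq σs le_self_add h₂, Ordinal.add_sub_cancel]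

lemma concatFun_of_forall_le {α : Type} {f : ℕ → Ordinal.{0} → α} {x : α} {β : Ordinal.{0}}
    (h : ∀ n, chunkStart σs n ≤ β) : concatFun σs f x β = x := by
  rw [concatFun, if_neg (by simpa using h)]

lemma t_zero_eq_of_chunkStart_eq (hchain : ∀ n, (σs n).t (σs n).len = (σs (n + 1)).t 0)
    {n k : ℕ} (hnk : n ≤ k) (heq : chunkStart σs k = chunkStart σs n) :
    (σs k).t 0 = (σs n).t 0 := by
  induction k, hnk using Nat.le_induction with
  | base => rfl
  | succ k hnk ih =>
    have hk : chunkStart σs k = chunkStart σs n :=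
      le_antisymm (heq ▸ chunkStart_mono σs k.le_succ) (chunkStart_mono σs hnk)
    have hlen : (σs k).len = 0 := add_eq_left.1 (heq.trans hk.symm)
    rw [← hchain, hlen, ih hk]

section concat

variable (b : Tm Sg X)

lemma concatFun_t_chunkStart (hchain : ∀ n, (σs n).t (σs n).len = (σs (n + 1)).t 0)
    (hunb : ∀ n, ∃ m, chunkStart σs n < chunkStart σs m) (n : ℕ) :
    concatFun σs (fun k => (σs k).t) b (chunkStart σs n) = (σs n).t 0 := by
  obtain ⟨k, δ, hδ, heq⟩ := exists_chunk σs (hunb n)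
  have hnk : n ≤ k :=
    le_of_chunkStart_le_of_lt σs le_rfl (heq ▸ (add_lt_add_iff_left _).2 hδ :)
  obtain rfl : δ = 0 := by
    have : chunkStart σs k + δ ≤ chunkStart σs k + 0 := by
      rw [← heq, add_zero]; exact chunkStart_mono σs hnk
    exact nonpos_iff_eq_zero.1 ((add_le_add_iff_left _).1 this)
  rw [add_zero] at heq
  rw [heq, ← add_zero (chunkStart σs k), concatFun_add hδ,
    t_zero_eq_of_chunkStart_eq hchain hnk heq.symm]

lemma concatFun_t_add_of_le (hchain : ∀ n, (σs n).t (σs n).len = (σs (n + 1)).t 0)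
    (hunb : ∀ n, ∃ m, chunkStart σs n < chunkStart σs m) {n : ℕ} {δ : Ordinal.{0}}
    (hδ : δ ≤ (σs n).len) :
    concatFun σs (fun k => (σs k).t) b (chunkStart σs n + δ) = (σs n).t δ := by
  rcases hδ.lt_or_eq with hδ | rfl
  · exact concatFun_add hδ
  · exact (concatFun_t_chunkStart b hchain hunb (n + 1)).trans (hchain n).symm

noncomputable def concat (hchain : ∀ n, (σs n).t (σs n).len = (σs (n + 1)).t 0)
    (hunb : ∀ n, ∃ m, chunkStart σs n < chunkStart σs m)
    (hb : ConvTo (concatFun σs (fun n => (σs n).t) b) (concatFun σs (fun n => (σs n).pos) [])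
      (⨆ n, chunkStart σs n) b) : SCSeq Q where
  len := ⨆ n, chunkStart σs n
  t := concatFun σs (fun n => (σs n).t) b
  pos := concatFun σs (fun n => (σs n).pos) []
  step β hβ := by
    obtain ⟨k, δ, hδ, rfl⟩ := exists_chunk σs (Ordinal.lt_iSup_iff.1 hβ)
    rw [concatFun_add hδ, concatFun_add hδ, add_assoc,
      concatFun_t_add_of_le b hchain hunb (Order.add_one_le_iff.2 hδ)]
    exact (σs k).step δ hδ
  conv l hl hlim := by
    rcases hl.lt_or_eq with hl | rfl
    · obtain ⟨k, δ, hδ0, hδ, rfl⟩ :=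
        exists_chunk_of_pos σs hlim.bot_lt (Ordinal.lt_iSup_iff.1 hl)
      have hδlim : Order.IsSuccLimit δ :=
        (Ordinal.isSuccLimit_add_iff.1 hlim).resolve_right fun h => hδ0.ne' h.1
      rw [concatFun_t_add_of_le b hchain hunb hδ]
      exact ConvTo.add_left (((σs k).conv δ hδ hδlim).congr fun δ' hδ' =>
        ⟨concatFun_t_add_of_le b hchain hunb (hδ'.le.trans hδ),
          concatFun_add (hδ'.trans_le hδ)⟩)
    · rwa [concatFun_of_forall_le (Ordinal.le_iSup _)]

end concat

lemma convTo_concatFun (hunb : ∀ n, ∃ m, chunkStart σs n < chunkStart σs m) {b : Tm Sg X}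
    (hdeep : ∀ n, ∀ β < (σs n).len, n ≤ ((σs n).pos β).length)
    (hagree : ∀ n, Agree n ((σs n).t 0) b) :
    ConvTo (concatFun σs (fun n => (σs n).t) b) (concatFun σs (fun n => (σs n).pos) [])
      (⨆ n, chunkStart σs n) b := by
  have hchunk : ∀ m, ∀ β < ⨆ n, chunkStart σs n, chunkStart σs m ≤ β →
      ∃ k δ, m ≤ k ∧ δ < (σs k).len ∧ β = chunkStart σs k + δ := fun m β hβ hmβ => by
    obtain ⟨k, δ, hδ, rfl⟩ := exists_chunk σs (Ordinal.lt_iSup_iff.1 hβ)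
    exact ⟨k, δ, le_of_chunkStart_le_of_lt σs hmβ ((add_lt_add_iff_left _).2 hδ), hδ, rfl⟩
  have hstart : ∀ m, chunkStart σs m < ⨆ n, chunkStart σs n := fun m =>
    (hunb m).elim fun k hk => hk.trans_le (Ordinal.le_iSup _ k)
  refine ⟨fun m => ⟨chunkStart σs m, hstart m, fun β hmβ hβ => ?_⟩,
    fun m => ⟨chunkStart σs m, hstart m, fun β hmβ hβ => ?_⟩⟩
  · obtain ⟨k, δ, hmk, hδ, rfl⟩ := hchunk m β hβ hmβ
    rw [concatFun_add hδ]
    exact (((σs k).agree_of_deep zero_le hδ.le fun γ _ hγ => hdeep k γ (hγ.trans hδ)).symm.trans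
      (hagree k)).mono hmk
  · obtain ⟨k, δ, hmk, hδ, rfl⟩ := hchunk m β hβ hmβ
    rw [concatFun_add hδ]
    exact hmk.trans (hdeep k δ hδ)

end SCSeq

namespace DeepSCRed

variable {Q : TRel Sg X}

lemma of_chunks {σs : ℕ → SCSeq Q} (hchain : ∀ n, (σs n).t (σs n).len = (σs (n + 1)).t 0)
    (hunb : ∀ n, ∃ m, SCSeq.chunkStart σs n < SCSeq.chunkStart σs m) {b : Tm Sg X}
    (hdeep : ∀ n, ∀ β < (σs n).len, n ≤ ((σs n).pos β).length)
    (hagree : ∀ n, Agree n ((σs n).t 0) b) : DeepSCRed Q 0 ((σs 0).t 0) b :=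
  ⟨SCSeq.concat b hchain hunb (SCSeq.convTo_concatFun hunb hdeep hagree),
    SCSeq.concatFun_t_chunkStart b hchain hunb 0,
    SCSeq.concatFun_of_forall_le (f := fun n => (σs n).t) (Ordinal.le_iSup _),
    fun _ _ => Nat.zero_le _⟩

lemma of_forall_agree {v : ℕ → Tm Sg X} {b : Tm Sg X}
    (h : ∀ n, DeepSCRed Q n (v n) (v (n + 1))) (hb : ∀ n, Agree n (v n) b) :
    DeepSCRed Q 0 (v 0) b := by
  by_cases hfin : ∃ n, v n = b
  · obtain ⟨n, rfl⟩ := hfin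
    clear hb
    induction n with
    | zero => exact refl 0 (v 0)
    | succ n ih => exact ih.trans ((h n).mono (Nat.zero_le n))
  push Not at hfin
  choose σs hσ0 hσe hdeep using h
  have hchain n : (σs n).t (σs n).len = (σs (n + 1)).t 0 := (hσe n).trans (hσ0 (n + 1)).symm
  refine hσ0 0 ▸ of_chunks hchain (fun n => ?_) hdeep fun n => hσ0 n ▸ hb n
  -- otherwise `v` is constant from `n` on, and this constant agrees with `b` at every depth
  by_contra! hbdd
  have hconst : ∀ k, n ≤ k → v k = v n := by
    intro k hnk
    induction k, hnk using Nat.le_induction with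
    | base => rfl
    | succ k hnk ih =>
      have hk : SCSeq.chunkStart σs (k + 1) = SCSeq.chunkStart σs k :=
        le_antisymm ((hbdd (k + 1)).trans (SCSeq.chunkStart_mono σs hnk))
          (SCSeq.chunkStart_mono σs k.le_succ)
      have hlen : (σs k).len = 0 := add_eq_left.1 hk
      rw [← hσe, hlen, hσ0, ih]
  refine hfin n (eq_of_forall_agree fun m => ?_)
  exact hconst (max m n) (le_max_right _ _) ▸ (hb (max m n)).mono (le_max_left _ _)

end DeepSCRed

section Forward

variable {Q G : TRel Sg X}

lemma agree_of_liftRel_iterate : ∀ {n : ℕ} {a b : Tm Sg X}, (liftRel^[n] G) a b → Agree n a b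
  | 0, _, _, _ => trivial
  | n + 1, _, _, h => by
    rw [Function.iterate_succ_apply'] at h
    rcases h with rfl | ⟨f, ss, ts, rfl, rfl, hi⟩
    · exact Agree.refl _ _
    · exact Or.inr ⟨f, ss, ts, rfl, rfl, fun i => agree_of_liftRel_iterate (hi i)⟩

lemma exists_deepSCRed_liftRel_iterate
    (hG : ∀ a b, G a b → ∃ c, DeepSCRed Q 0 a c ∧ liftRel G c b) :
    ∀ {n : ℕ} {a b : Tm Sg X}, (liftRel^[n] G) a b →
      ∃ c, DeepSCRed Q n a c ∧ (liftRel^[n + 1] G) c b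
  | 0, a, b, h => hG a b h
  | n + 1, a, b, h => by
    rw [Function.iterate_succ_apply'] at h
    simp only [Function.iterate_succ_apply']
    rcases h with rfl | ⟨f, ss, ts, rfl, rfl, hi⟩
    · exact ⟨a, DeepSCRed.refl _ _, Or.inl rfl⟩
    · choose cs hcs hcb using fun i => exists_deepSCRed_liftRel_iterate hG (hi i)
      exact ⟨Tm.node f cs, DeepSCRed.of_liftRel (Or.inr ⟨f, ss, cs, rfl, rfl, hcs⟩),
        Or.inr ⟨f, cs, ts, rfl, rfl, fun i => by
          simpa only [Function.iterate_succ_apply'] using hcb i⟩⟩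

/-- Iterating `hG` inside ever deeper contexts yields reductions of increasing depth, which are
then concatenated. -/
lemma deepSCRed_of_forall_exists (hG : ∀ a b, G a b → ∃ c, DeepSCRed Q 0 a c ∧ liftRel G c b)
    {a b : Tm Sg X} (hab : G a b) : DeepSCRed Q 0 a b := by
  choose next hnext using fun n (c : {c // (liftRel^[n] G) c b}) =>
    exists_deepSCRed_liftRel_iterate hG c.2
  let v : (n : ℕ) → {c // (liftRel^[n] G) c b} :=
    fun n => Nat.rec ⟨a, hab⟩ (fun n c => ⟨next n c, (hnext n c).2⟩) n
  exact DeepSCRed.of_forall_agree (v := fun n => (v n).1) (fun n => (hnext n (v n)).1)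
    fun n => agree_of_liftRel_iterate (v n).2

lemma ired_le_iredOrd (R : TRS Sg X) : ired R ≤ iredOrd R := by
  refine OrderHom.lfp_le _ fun a b hab => scRed_iff_deepSCRed_zero.2 ?_
  refine deepSCRed_of_forall_exists (fun a b h => ?_) hab
  obtain ⟨c, hac, hcb⟩ := (OrderHom.map_gfp (iredInnerHom R (iredOrd R))).symm ▸ h
  exact ⟨c, DeepSCRed.of_reflTransGen (fun _ _ => scRed_iff_deepSCRed_zero.1) hac, hcb⟩

end Forward

lemma ired_coinduct {R : TRS Sg X} {V : TRel Sg X} (h : V ≤ iredInnerHom R (ired R) V) :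
    V ≤ ired R :=
  (OrderHom.le_gfp _ h).trans_eq (OrderHom.map_lfp (iredHom R))

namespace SCSeq

variable {Q : TRel Sg X} (σ : SCSeq Q)

def SubtermRel (r : Ordinal.{0}) : TRel Sg X := fun u w =>
  ∃ p l, l ≤ r ∧ (∀ β, l ≤ β → β < r → σ.pos β <+: p → σ.pos β = p) ∧
    SubAt p (σ.t l) u ∧ SubAt p (σ.t r) w

lemma exists_subAt_liftRel_subtermRel {p : List ℕ} {l r : Ordinal.{0}} (hlr : l ≤ r)
    (hr : r ≤ σ.len) (havoid : ∀ β, l ≤ β → β < r → ¬ σ.pos β <+: p) {u : Tm Sg X}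
    (hu : SubAt p (σ.t l) u) : ∃ w, SubAt p (σ.t r) w ∧ liftRel (σ.SubtermRel r) u w := by
  obtain ⟨w, hw, huw⟩ := σ.exists_subAt_agree_one hlr hr havoid hu
  refine ⟨w, hw, ?_⟩
  rcases Tm.var_or_node u with ⟨x, rfl⟩ | ⟨f, as, rfl⟩
  · exact Or.inl huw.var_left.symm
  · obtain ⟨bs, rfl⟩ := huw.node_left
    refine Or.inr ⟨f, as, bs, rfl, rfl, fun i => ⟨p ++ [(i : ℕ)], l, hlr, fun β h₁ h₂ hpre => ?_,
      hu.concat i, hw.concat i⟩⟩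
    exact (List.prefix_concat_iff.1 hpre).resolve_right (havoid β h₁ h₂)

def stepsAt (p : List ℕ) (l r : Ordinal.{0}) : Set Ordinal.{0} :=
  {β | l ≤ β ∧ β < r ∧ σ.pos β = p}

lemma finite_stepsAt (p : List ℕ) (l : Ordinal.{0}) {r : Ordinal.{0}} (hr : r ≤ σ.len) :
    (σ.stepsAt p l r).Finite :=
  (σ.finite_shallow p.length hr).subset fun _ hβ => ⟨hβ.2.1, hβ.2.2 ▸ le_rfl⟩

lemma stepsAt_add_one {p : List ℕ} {l r m : Ordinal.{0}} (hm : IsLeast (σ.stepsAt p l r) m) :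
    σ.stepsAt p (m + 1) r = σ.stepsAt p l r \ {m} := by
  ext β
  simp only [stepsAt, Set.mem_ofPred_eq, Set.mem_sdiff, Set.mem_singleton_iff,
    Order.add_one_le_iff]
  exact ⟨fun ⟨h₁, h₂, h₃⟩ => ⟨⟨hm.1.1.trans h₁.le, h₂, h₃⟩, h₁.ne'⟩,
    fun ⟨hβ, hne⟩ => ⟨(hm.2 hβ).lt_of_ne' hne, hβ.2⟩⟩

variable {R : TRS Sg X} (σ : SCSeq (RootStep R))

/-- Induction on the number of steps exactly at `p`: each of them is a root step of the
subterm at `p`, preceded by a lifted `ired` step obtained from `ih`. -/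
lemma subtermRel_le_inner {r : Ordinal.{0}} (hr : r ≤ σ.len)
    (ih : ∀ m < r, σ.SubtermRel m ≤ ired R) {p : List ℕ} :
    ∀ (k : ℕ) {l : Ordinal.{0}} {u w : Tm Sg X}, l ≤ r →
      (∀ β, l ≤ β → β < r → σ.pos β <+: p → σ.pos β = p) → (σ.stepsAt p l r).ncard = k →
      SubAt p (σ.t l) u → SubAt p (σ.t r) w →
      relComp (ReflTransGen fun s t => RootStep R s t ∨ liftRel (ired R) s t)
        (liftRel (σ.SubtermRel r)) u w := by
  intro k
  induction k with
  | zero =>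
    intro l u w hlr havoid hk hu hw
    have hB := (Set.ncard_eq_zero (σ.finite_stepsAt p l hr)).1 hk
    obtain ⟨w', hw', huw'⟩ := σ.exists_subAt_liftRel_subtermRel hlr hr (u := u)
      (fun β h₁ h₂ hpre => hB.subset ⟨h₁, h₂, havoid β h₁ h₂ hpre⟩) hu
    exact ⟨u, .refl, hw'.unique hw ▸ huw'⟩
  | succ k ihk =>
    intro l u w hlr havoid hk hu hw
    obtain ⟨⟨hlm, hmr, hpm⟩, hmin⟩ : IsLeast (σ.stepsAt p l r) (sInf (σ.stepsAt p l r)) :=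
      isLeast_csInf (Set.nonempty_of_ncard_ne_zero (by omega))
    set m := sInf (σ.stepsAt p l r)
    obtain ⟨u', hu', huu'⟩ := σ.exists_subAt_liftRel_subtermRel hlm (hmr.le.trans hr) (u := u)
      (fun β h₁ h₂ hpre => h₂.not_ge (hmin ⟨h₁, h₂.trans hmr, havoid β h₁ (h₂.trans hmr) hpre⟩))
      hu
    have hstep := σ.step m (hmr.trans_le hr)
    rw [hpm, ← List.append_nil p] at hstep
    obtain ⟨c, hc, hu'c⟩ := hstep.exists_subAt_of_prefix hu'
    have hmB : m ∈ σ.stepsAt p l r := ⟨hlm, hmr, hpm⟩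
    have hk' : (σ.stepsAt p (m + 1) r).ncard = k := by
      rw [σ.stepsAt_add_one ⟨hmB, hmin⟩, Set.ncard_sdiff_singleton_of_mem hmB, hk,
        Nat.add_sub_cancel]
    obtain ⟨z, hcz, hzw⟩ := ihk (Order.add_one_le_iff.2 hmr)
      (fun β h₁ h₂ => havoid β (hlm.trans (Order.add_one_le_iff.1 h₁).le) h₂) hk' hc hw
    exact ⟨z, .head (.inr (liftRel_mono (ih m hmr) _ _ huu')) (.head (.inl hu'c.nil_inv) hcz),
      hzw⟩

lemma subtermRel_le_ired {r : Ordinal.{0}} (hr : r ≤ σ.len) : σ.SubtermRel r ≤ ired R := by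
  induction r using WellFoundedLT.induction with
  | _ r ih =>
    exact ired_coinduct fun u w ⟨p, l, hlr, havoid, hu, hw⟩ =>
      σ.subtermRel_le_inner hr (fun m hm => ih m hm (hm.le.trans hr)) _ hlr havoid rfl hu hw

end SCSeq

lemma iredOrd_le_ired (R : TRS Sg X) : iredOrd R ≤ ired R := fun a b hab => by
  obtain ⟨σ, rfl, rfl, -⟩ := scRed_iff_deepSCRed_zero.1 hab
  exact σ.subtermRel_le_ired le_rfl _ _
    ⟨[], 0, zero_le, fun _ _ _ h => List.prefix_nil.1 h, SubAt.nil _, SubAt.nil _⟩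

theorem ired_eq_iredOrd_general (Sg : Signature) (X : Type) (R : TRS Sg X) :
    ∀ s t : Tm Sg X, ired R s t ↔ iredOrd R s t :=
  fun s t => ⟨fun h => ired_le_iredOrd R s t h, fun h => iredOrd_le_ired R s t h⟩

/-- For every TRS `R` over a signature `Σ`, the fixed-point defined
infinitary rewrite relation `→∞ = μR.νS.((→ε ∪ ↓R)* ∘ ↓S)` coincides with the standard
ordinal-based relation `→∞_ord` of strongly convergent transfinite reduction. -/
theorem ired_eq_iredOrd (Sg : Signature) (X : Type) [Infinite X] (R : TRS Sg X) :
    ∀ s t : Tm Sg X, ired R s t ↔ iredOrd R s t :=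
  ired_eq_iredOrd_general Sg X R
end

section
/- For every TRS R over a signature Σ, the infinitary equational reasoning relation is a fixed point of the closure operator T∞: =∞ = T∞(=∞), where T∞(S) := νR.(S⁻¹ ∪ S ∪ ↓R)*. -/
open Relation

variable {Sg : Signature} {X : Type}

/-- The monotone operator `U ↦ (S⁻¹ ∪ S ∪ ↓U)*` (for a fixed relation `S`). -/
def TinfHom (S : TRel Sg X) : TRel Sg X →o TRel Sg X where
  toFun U := Relation.ReflTransGen (fun a b => S b a ∨ S a b ∨ liftRel U a b)
  monotone' := by
    intro U V h a b hab
    refine ReflTransGen.mono ?_ _ _ hab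
    intro x y hxy
    exact hxy.imp id (fun h' => h'.imp id (fun h'' => liftRel_mono h _ _ h''))

/-- The closure operator `T∞(S) := νR.(S⁻¹ ∪ S ∪ ↓R)*`. -/
def Tinf (S : TRel Sg X) : TRel Sg X := OrderHom.gfp (TinfHom S)

/-!
`=∞` is literally `T∞(→ε)`, so the claim is that `T∞` is idempotent. Since `S ⊆ T∞(S)`,
only `T∞(T∞(S)) ⊆ T∞(S)` needs proof, by coinduction. Now `T∞(S)` is symmetric, and every
`T∞(S)`-step unfolds to a finite `(S⁻¹ ∪ S ∪ ↓T∞(S))`-chain whose lifted steps lie in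
`↓T∞(T∞(S))`; hence `T∞(T∞(S))` is a post-fixed point of `U ↦ (S⁻¹ ∪ S ∪ ↓U)*`.
-/

lemma liftRel_swap {U : TRel Sg X} {s t : Tm Sg X} (h : liftRel U s t) :
    liftRel (Function.swap U) t s := by
  rcases h with rfl | ⟨f, ss, ts, rfl, rfl, hi⟩
  · exact Or.inl rfl
  · exact Or.inr ⟨f, ts, ss, rfl, rfl, hi⟩

namespace Tinf

variable {S : TRel Sg X}

lemma unfold (S : TRel Sg X) :
    Tinf S = ReflTransGen (fun a b => S b a ∨ S a b ∨ liftRel (Tinf S) a b) :=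
  (OrderHom.map_gfp (TinfHom S)).symm

lemma le_self (S : TRel Sg X) : S ≤ Tinf S :=
  OrderHom.le_gfp _ fun _ _ h => ReflTransGen.single (Or.inr (Or.inl h))

lemma symm {a b : Tm Sg X} (h : Tinf S a b) : Tinf S b a := by
  refine OrderHom.le_gfp (TinfHom S) (a := Function.swap (Tinf S)) (fun s t hst => ?_) b a h
  rw [Function.swap, unfold] at hst
  refine ReflTransGen.mono (fun x y hxy => ?_) s t (ReflTransGen.swap _ _ hst)
  rcases hxy with hS | hS | hU
  · exact Or.inr (Or.inl hS)
  · exact Or.inl hS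
  · exact Or.inr (Or.inr (liftRel_swap hU))

lemma idem (S : TRel Sg X) : Tinf (Tinf S) = Tinf S := by
  refine le_antisymm ?_ (le_self _)
  refine OrderHom.le_gfp (TinfHom S) fun a b hab => ?_
  have hlift : liftRel (Tinf S) ≤ liftRel (Tinf (Tinf S)) := liftRel_mono (le_self _)
  have hstep : ∀ x y, Tinf S x y →
      ReflTransGen (fun a b => S b a ∨ S a b ∨ liftRel (Tinf (Tinf S)) a b) x y := by
    intro x y hxy
    rw [unfold] at hxy
    exact ReflTransGen.mono (fun u v huv => huv.imp_right (Or.imp_right (hlift u v))) x y hxy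
  rw [unfold] at hab
  refine reflTransGen_closed (fun x y hxy => ?_) a b hab
  rcases hxy with h | h | h
  · exact hstep x y (symm h)
  · exact hstep x y h
  · exact ReflTransGen.single (Or.inr (Or.inr h))

end Tinf

lemma ieq_eq_Tinf_rootStep (R : TRS Sg X) : ieq R = Tinf (RootStep R) := rfl

theorem ieq_fixed_point_Tinf_general (Sg : Signature) (X : Type) (R : TRS Sg X) :
    ieq R = Tinf (ieq R) := by
  rw [ieq_eq_Tinf_rootStep, Tinf.idem]

/-- For every TRS `R`, the infinitary equational reasoning relation
`=∞` is a fixed point of the closure operator `T∞`: `=∞ = T∞(=∞)`. -/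
theorem ieq_fixed_point_Tinf (Sg : Signature) (X : Type) [Infinite X] (R : TRS Sg X) :
    ieq R = Tinf (ieq R) :=
  ieq_fixed_point_Tinf_general Sg X R
end
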